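/- Fix an integer k ≥ 2 and disjoint finite sets A, B with |A| = |B| = 2k; let P = A ∪ B. Let S* ⊆ P satisfy |S*∩A| = k+1 and |S*∩B| = k−1. Then for every S ⊆ P with |S∩A| ≠ |S∩B| and S ≠ S*, one has |S| − v_{S*}(S) > |S*| − v_{S*}(S*) = −1/6. In other words, with the cost allocation y ≡ 1, the set S* is the unique minimizer of the excess y(S) − v_{S*}(S) among all coalitions S with |S∩A| ≠ |S∩B|. -/

import Mathlib

/-- The game `v̄`: `v̄(S) = 2k + 1/2` if `|S| > 2k` or `|S∩A| = |S∩B| = k`, else `|S|`. -/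
noncomputable def vbar {U : Type*} [DecidableEq U] (k : ℕ) (A B : Finset U)
    (S : Finset U) : ℝ :=
  if 2 * k < S.card ∨ ((S ∩ A).card = k ∧ (S ∩ B).card = k) then (2 * k : ℝ) + 1 / 2
  else (S.card : ℝ)

/-- The game `v_{S*}`: equals `v̄` except `v_{S*}(S*) = 2k + 1/6`. -/
noncomputable def vS {U : Type*} [DecidableEq U] (k : ℕ) (A B Sstar : Finset U)
    (S : Finset U) : ℝ :=
  if S = Sstar then (2 * k : ℝ) + 1 / 6 else vbar k A B S

/-! With `y ≡ 1` the excess `|S| - v_{S*}(S)` is `-1/6` at `S*`, since `|S*| = 2k`. Every other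
unbalanced coalition has excess `≥ 0`: `v̄(S) = |S|` unless `|S| > 2k`, in which case
`|S| ≥ 2k + 1 > v̄(S)`. -/

section

variable {U : Type*} [DecidableEq U]

theorem Finset.card_eq_card_inter_add_card_inter {A B S : Finset U} (hAB : Disjoint A B)
    (hS : S ⊆ A ∪ B) : S.card = (S ∩ A).card + (S ∩ B).card := by
  rw [← Finset.card_union_of_disjoint (hAB.mono inter_subset_right inter_subset_right),
    ← Finset.inter_union_distrib_left, Finset.inter_eq_left.mpr hS]

theorem vbar_le_card (k : ℕ) {A B S : Finset U} (hS : (S ∩ A).card ≠ (S ∩ B).card) :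
    vbar k A B S ≤ S.card := by
  unfold vbar
  split_ifs with h
  · have hlt : 2 * k < S.card := h.resolve_right fun ⟨hA, hB⟩ => hS (hA.trans hB.symm)
    have : (2 * k : ℝ) + 1 ≤ S.card := by exact_mod_cast hlt
    linarith
  · exact le_rfl

theorem vS_self (k : ℕ) (A B Sstar : Finset U) : vS k A B Sstar Sstar = 2 * k + 1 / 6 :=
  if_pos rfl

theorem vS_of_ne (k : ℕ) (A B : Finset U) {Sstar S : Finset U} (h : S ≠ Sstar) :
    vS k A B Sstar S = vbar k A B S :=
  if_neg h

end

theorem stmt7_general {U : Type*} [DecidableEq U] (k : ℕ) (hk : 2 ≤ k)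
    (A B : Finset U) (hAB : Disjoint A B)
    (P : Finset U) (hP : P = A ∪ B)
    (Sstar : Finset U) (hSsub : Sstar ⊆ P)
    (hSA : (Sstar ∩ A).card = k + 1) (hSB : (Sstar ∩ B).card = k - 1) :
    (∀ S ⊆ P, (S ∩ A).card ≠ (S ∩ B).card → S ≠ Sstar →
      (Sstar.card : ℝ) - vS k A B Sstar Sstar < (S.card : ℝ) - vS k A B Sstar S) ∧
    (Sstar.card : ℝ) - vS k A B Sstar Sstar = -(1 / 6) := by
  subst hP
  have hcard : Sstar.card = 2 * k := by
    rw [Finset.card_eq_card_inter_add_card_inter hAB hSsub, hSA, hSB]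
    omega
  have hexcess : (Sstar.card : ℝ) - vS k A B Sstar Sstar = -(1 / 6) := by
    rw [vS_self, hcard]
    push_cast
    ring
  refine ⟨fun S _ hunbal hne => ?_, hexcess⟩
  rw [hexcess, vS_of_ne k A B hne]
  linarith [vbar_le_card k hunbal]

/-- With the all-ones allocation, `S*` is the unique minimizer of the excess
`|S| − v_{S*}(S)` among coalitions `S ⊆ P` with `|S∩A| ≠ |S∩B|`, and its excess is `−1/6`. -/
theorem stmt7 {U : Type*} [DecidableEq U] (k : ℕ) (hk : 2 ≤ k)
    (A B : Finset U) (hAB : Disjoint A B) (hA : A.card = 2 * k) (hB : B.card = 2 * k)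
    (P : Finset U) (hP : P = A ∪ B)
    (Sstar : Finset U) (hSsub : Sstar ⊆ P)
    (hSA : (Sstar ∩ A).card = k + 1) (hSB : (Sstar ∩ B).card = k - 1) :
    (∀ S ⊆ P, (S ∩ A).card ≠ (S ∩ B).card → S ≠ Sstar →
      (Sstar.card : ℝ) - vS k A B Sstar Sstar < (S.card : ℝ) - vS k A B Sstar S) ∧
    (Sstar.card : ℝ) - vS k A B Sstar Sstar = -(1 / 6) :=
  stmt7_general k hk A B hAB P hP Sstar hSsub hSA hSB
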